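/- arXiv:math-ph/0611022 — 5 statements merged into one kernel-verified Lean document; each statement's English description precedes it below -/
import Mathlib

section
/- Deterministic Oseledec theorem in dimension 2 (Theorem 3.6): Let (U(n))_{n\ge 1} be a sequence of real 2\times 2 matrices of determinant 1 such that (i) the limit \gamma := lim_{n\to\infty} (1/n) \log \|U(n)\| exists and is finite, and (ii) lim_{n\to\infty} (1/n) \log \|U(n) U(n-1)^{-1}\| = 0 (with the convention U(0) = I). Then there exists a nonzero vector F_0 \in \mathbb{R}^2 with lim_{n\to\infty} (1/n) \log |U(n) F_0| = -\gamma, and for every F \in \mathbb{R}^2 that is not a scalar multiple of F_0 one has lim_{n\to\infty} (1/n) \log |U(n) F| = \gamma. In particular, for every \varepsilon > 0 there exists C(\varepsilon) > 0 such that |U(n) F_0| \le C(\varepsilon) e^{-(\gamma - \varepsilon) n} for all n \ge 1. -/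
/-- The operator norm of a real 2×2 matrix with respect to the Euclidean norm on `ℝ²`. -/
noncomputable def opNorm (A : Matrix (Fin 2) (Fin 2) ℝ) : ℝ :=
  ‖Matrix.toEuclideanCLM (𝕜 := ℝ) A‖

/-- The Euclidean norm of a vector in `ℝ²`. -/
noncomputable def eNorm (v : Fin 2 → ℝ) : ℝ :=
  Real.sqrt (v 0 ^ 2 + v 1 ^ 2)

/-!
For `A ∈ SL₂(ℝ)`, let `w` be a unit vector with `|A w| = ‖A‖` and `v` the unit vector
perpendicular to it. The first-order condition for the maximum gives `A v ⟂ A w`, and `A`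
preserves area, so `|A v| = ‖A‖⁻¹` while `|A u| ≥ ‖A‖ |cross v u|` for every `u`.
Applied to the contracting directions `v n` of `U n` and `v (n + 1)` of
`U (n + 1) = (U (n + 1) * (U n)⁻¹) * U n`, this gives
`|cross (v n) (v (n + 1))| ≤ ‖U (n + 1) * (U n)⁻¹‖ / (‖U n‖ ‖U (n + 1)‖) ≈ e^{-2γn}`.
So for `γ > 0` the directions, with suitably chosen signs, converge at rate `e^{-2γn}` to some
`F₀`, and `|U n F₀| ≤ ‖U n‖⁻¹ + ‖U n‖ |v n - F₀| ≈ e^{-γn}`, whereas a vector `F` off the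
line of `F₀` keeps a definite angle with `v n`, so `|U n F| ≳ ‖U n‖`. For `γ = 0` any direction
works, since `‖U n‖⁻¹ |F| ≤ |U n F| ≤ ‖U n‖ |F|`.
-/

open Filter Real Asymptotics Matrix Topology

def cross (x y : Fin 2 → ℝ) : ℝ := x 0 * y 1 - x 1 * y 0

def perp (w : Fin 2 → ℝ) : Fin 2 → ℝ := ![w 1, -w 0]

lemma eNorm_eq_norm_toLp (v : Fin 2 → ℝ) :
    eNorm v = ‖(WithLp.toLp 2 v : EuclideanSpace ℝ (Fin 2))‖ := by
  simp [eNorm, EuclideanSpace.norm_eq, Fin.sum_univ_two]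

lemma dist_toLp (v w : Fin 2 → ℝ) :
    dist (WithLp.toLp 2 v : EuclideanSpace ℝ (Fin 2)) (WithLp.toLp 2 w) = eNorm (v - w) := by
  rw [dist_eq_norm, ← WithLp.toLp_sub, eNorm_eq_norm_toLp]

lemma continuous_eNorm : Continuous eNorm := by
  simpa only [funext eNorm_eq_norm_toLp] using (PiLp.continuous_toLp 2 _).norm

lemma continuous_cross_left (y : Fin 2 → ℝ) : Continuous fun x => cross x y := by
  unfold cross
  fun_prop

lemma eNorm_nonneg (v : Fin 2 → ℝ) : 0 ≤ eNorm v := Real.sqrt_nonneg _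

lemma eNorm_sq (v : Fin 2 → ℝ) : eNorm v ^ 2 = v 0 ^ 2 + v 1 ^ 2 :=
  Real.sq_sqrt (by positivity)

lemma eNorm_add_le (v w : Fin 2 → ℝ) : eNorm (v + w) ≤ eNorm v + eNorm w := by
  simpa only [eNorm_eq_norm_toLp, WithLp.toLp_add] using norm_add_le _ _

lemma eNorm_neg (v : Fin 2 → ℝ) : eNorm (-v) = eNorm v := by
  simp [eNorm]

lemma eNorm_sub_comm (v w : Fin 2 → ℝ) : eNorm (v - w) = eNorm (w - v) := by
  rw [← eNorm_neg, neg_sub]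

lemma eNorm_ne_zero {v : Fin 2 → ℝ} (hv : v ≠ 0) : eNorm v ≠ 0 := by
  rwa [eNorm_eq_norm_toLp, norm_ne_zero_iff, Ne, WithLp.toLp_eq_zero]

lemma eNorm_mulVec_le (A : Matrix (Fin 2) (Fin 2) ℝ) (v : Fin 2 → ℝ) :
    eNorm (A *ᵥ v) ≤ opNorm A * eNorm v := by
  rw [eNorm_eq_norm_toLp, eNorm_eq_norm_toLp, ← toEuclideanCLM_toLp]
  exact (toEuclideanCLM (𝕜 := ℝ) A).le_opNorm _

lemma eNorm_add_smul_sq (x y : Fin 2 → ℝ) (t : ℝ) :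
    eNorm (x + t • y) ^ 2 = eNorm x ^ 2 + 2 * t * (x ⬝ᵥ y) + t ^ 2 * eNorm y ^ 2 := by
  simp only [eNorm_sq, dotProduct, Fin.sum_univ_two, Pi.add_apply, Pi.smul_apply, smul_eq_mul]
  ring

lemma sq_dotProduct_add_sq_cross (x y : Fin 2 → ℝ) :
    (x ⬝ᵥ y) ^ 2 + cross x y ^ 2 = eNorm x ^ 2 * eNorm y ^ 2 := by
  simp only [eNorm_sq, dotProduct, Fin.sum_univ_two, cross]
  ring

lemma abs_cross_le (x y : Fin 2 → ℝ) : |cross x y| ≤ eNorm x * eNorm y := by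
  refine abs_le_of_sq_le_sq ?_ (mul_nonneg (eNorm_nonneg x) (eNorm_nonneg y))
  nlinarith [sq_dotProduct_add_sq_cross x y, sq_nonneg (x ⬝ᵥ y)]

lemma cross_mulVec (A : Matrix (Fin 2) (Fin 2) ℝ) (x y : Fin 2 → ℝ) :
    cross (A *ᵥ x) (A *ᵥ y) = A.det * cross x y := by
  simp only [cross, mulVec, dotProduct, Fin.sum_univ_two, det_fin_two]
  ring

lemma cross_perp_self (w : Fin 2 → ℝ) : cross (perp w) w = eNorm w ^ 2 := by
  simp [cross, perp, eNorm_sq]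
  ring

lemma perp_dotProduct_self (w : Fin 2 → ℝ) : perp w ⬝ᵥ w = 0 := by
  simp [perp, dotProduct, Fin.sum_univ_two]
  ring

lemma eNorm_perp (w : Fin 2 → ℝ) : eNorm (perp w) = eNorm w := by
  simp [eNorm, perp]
  ring_nf

lemma eNorm_sub_le_two_mul_abs_cross {x y : Fin 2 → ℝ} (hx : eNorm x = 1) (hy : eNorm y = 1)
    (hxy : 0 ≤ x ⬝ᵥ y) : eNorm (x - y) ≤ 2 * |cross x y| := by
  have hlag := sq_dotProduct_add_sq_cross x y
  have hsub := eNorm_add_smul_sq x y (-1)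
  rw [hx, hy] at hlag hsub
  rw [sub_eq_add_neg, ← neg_one_smul ℝ y]
  refine (sq_le_sq₀ (eNorm_nonneg _) (by positivity)).1 ?_
  nlinarith [sq_abs (cross x y)]

lemma eq_smul_of_cross_eq_zero {x y : Fin 2 → ℝ} (hx : eNorm x = 1) (h : cross x y = 0) :
    y = (x ⬝ᵥ y) • x := by
  have hx2 := eNorm_sq x
  rw [hx] at hx2
  ext i
  fin_cases i <;> simp [dotProduct, Fin.sum_univ_two, cross] at h ⊢
  · linear_combination (-(x 1)) * h + y 0 * hx2
  · linear_combination x 0 * h + y 1 * hx2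

lemma ContinuousLinearMap.exists_mem_sphere_norm_apply_eq_opNorm {E F : Type*}
    [NormedAddCommGroup E] [NormedSpace ℝ E] [FiniteDimensional ℝ E] [Nontrivial E]
    [NormedAddCommGroup F] [NormedSpace ℝ F] (f : E →L[ℝ] F) :
    ∃ x ∈ Metric.sphere (0 : E) 1, ‖f x‖ = ‖f‖ := by
  have hK : IsCompact ((fun x => ‖f x‖) '' Metric.sphere 0 1) :=
    (isCompact_sphere 0 1).image (by fun_prop)
  simpa [f.sSup_sphere_eq_norm] using
    hK.sSup_mem ((NormedSpace.sphere_nonempty.2 zero_le_one).image _)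

lemma exists_eNorm_eq_one_eNorm_mulVec_eq_opNorm (A : Matrix (Fin 2) (Fin 2) ℝ) :
    ∃ w, eNorm w = 1 ∧ eNorm (A *ᵥ w) = opNorm A := by
  obtain ⟨x, hx, hAx⟩ := (toEuclideanCLM (𝕜 := ℝ) A).exists_mem_sphere_norm_apply_eq_opNorm
  refine ⟨WithLp.ofLp x, ?_, ?_⟩
  · simpa [eNorm_eq_norm_toLp] using hx
  · rwa [eNorm_eq_norm_toLp, ← toEuclideanCLM_toLp, WithLp.toLp_ofLp]

lemma eq_zero_of_forall_mul_le_sq_mul {b c : ℝ} (h : ∀ t : ℝ, t * b ≤ t ^ 2 * c) : b = 0 := by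
  have hmin : IsLocalMin (fun t : ℝ => t ^ 2 * c - t * b) 0 :=
    Eventually.of_forall fun t => by simpa using h t
  have hderiv : HasDerivAt (fun t : ℝ => t ^ 2 * c - t * b) (-b) 0 :=
    (((hasDerivAt_pow 2 (0 : ℝ)).mul_const c).sub (hasDerivAt_mul_const b)).congr_deriv (by simp)
  simpa using hmin.hasDerivAt_eq_zero hderiv

lemma opNorm_nonneg (A : Matrix (Fin 2) (Fin 2) ℝ) : 0 ≤ opNorm A := norm_nonneg _

/-- `|cross v u|` is the length of the component of `u` orthogonal to the unit vector `v`. -/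
def IsContractingDir (A : Matrix (Fin 2) (Fin 2) ℝ) (v : Fin 2 → ℝ) : Prop :=
  eNorm v = 1 ∧ eNorm (A *ᵥ v) ≤ (opNorm A)⁻¹ ∧ ∀ u, opNorm A * |cross v u| ≤ eNorm (A *ᵥ u)

lemma IsContractingDir.neg {A : Matrix (Fin 2) (Fin 2) ℝ} {v : Fin 2 → ℝ}
    (hv : IsContractingDir A v) : IsContractingDir A (-v) := by
  obtain ⟨h1, h2, h3⟩ := hv
  refine ⟨by rwa [eNorm_neg], by rwa [mulVec_neg, eNorm_neg], fun u => ?_⟩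
  have hneg : cross (-v) u = -cross v u := by simp only [cross, Pi.neg_apply]; ring
  rw [hneg, abs_neg]
  exact h3 u

theorem exists_isContractingDir {A : Matrix (Fin 2) (Fin 2) ℝ} (hA : A.det = 1) :
    ∃ v, IsContractingDir A v := by
  obtain ⟨w, hw, hAw⟩ := exists_eNorm_eq_one_eNorm_mulVec_eq_opNorm A
  set v := perp w
  have hv : eNorm v = 1 := by rw [eNorm_perp, hw]
  have horth : (A *ᵥ w) ⬝ᵥ (A *ᵥ v) = 0 := by
    refine eq_zero_of_forall_mul_le_sq_mul (c := (opNorm A ^ 2 - eNorm (A *ᵥ v) ^ 2) / 2)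
      fun t => ?_
    have hle := pow_le_pow_left₀ (eNorm_nonneg _) (eNorm_mulVec_le A (w + t • v)) 2
    have hwv : w ⬝ᵥ v = 0 := by rw [dotProduct_comm]; exact perp_dotProduct_self w
    rw [mulVec_add, mulVec_smul, eNorm_add_smul_sq, mul_pow, eNorm_add_smul_sq, hw, hv, hAw,
      hwv] at hle
    linarith
  have hcross : cross (A *ᵥ v) (A *ᵥ w) = 1 := by
    rw [cross_mulVec, hA, cross_perp_self, hw]; norm_num
  have hprod : eNorm (A *ᵥ v) * opNorm A = 1 := by
    have h := sq_dotProduct_add_sq_cross (A *ᵥ v) (A *ᵥ w)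
    rw [dotProduct_comm, horth, hcross, hAw] at h
    have h0 : 0 ≤ eNorm (A *ᵥ v) * opNorm A := mul_nonneg (eNorm_nonneg _) (opNorm_nonneg A)
    exact (pow_eq_one_iff_of_nonneg h0 two_ne_zero).1 (by linear_combination -h)
  refine ⟨v, hv, (eq_inv_of_mul_eq_one_left hprod).le, fun u => ?_⟩
  calc opNorm A * |cross v u| = opNorm A * |cross (A *ᵥ v) (A *ᵥ u)| := by
        rw [cross_mulVec, hA, one_mul]
    _ ≤ opNorm A * (eNorm (A *ᵥ v) * eNorm (A *ᵥ u)) :=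
        mul_le_mul_of_nonneg_left (abs_cross_le _ _) (opNorm_nonneg A)
    _ = eNorm (A *ᵥ u) := by rw [← mul_assoc, mul_comm (opNorm A), hprod, one_mul]

lemma eNorm_le_opNorm_mul_eNorm_mulVec {A : Matrix (Fin 2) (Fin 2) ℝ} (hA : A.det = 1)
    (u : Fin 2 → ℝ) : eNorm u ≤ opNorm A * eNorm (A *ᵥ u) := by
  have h : eNorm u * eNorm u ≤ eNorm u * (opNorm A * eNorm (A *ᵥ u)) :=
    calc eNorm u * eNorm u = cross (A *ᵥ perp u) (A *ᵥ u) := by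
          rw [cross_mulVec, hA, one_mul, cross_perp_self, sq]
      _ ≤ eNorm (A *ᵥ perp u) * eNorm (A *ᵥ u) := (le_abs_self _).trans (abs_cross_le _ _)
      _ ≤ opNorm A * eNorm u * eNorm (A *ᵥ u) := by
          refine mul_le_mul_of_nonneg_right ?_ (eNorm_nonneg _)
          simpa only [eNorm_perp] using eNorm_mulVec_le A (perp u)
      _ = eNorm u * (opNorm A * eNorm (A *ᵥ u)) := by ring
  rcases (eNorm_nonneg u).eq_or_lt with h0 | hpos
  · rw [← h0]
    exact mul_nonneg (opNorm_nonneg A) (eNorm_nonneg _)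
  · exact le_of_mul_le_mul_left h hpos

lemma one_le_opNorm {A : Matrix (Fin 2) (Fin 2) ℝ} (hA : A.det = 1) : 1 ≤ opNorm A := by
  obtain ⟨w, hw, hAw⟩ := exists_eNorm_eq_one_eNorm_mulVec_eq_opNorm A
  have h := eNorm_le_opNorm_mul_eNorm_mulVec hA w
  rw [hw, hAw] at h
  nlinarith [opNorm_nonneg A]

lemma opNorm_pos {A : Matrix (Fin 2) (Fin 2) ℝ} (hA : A.det = 1) : 0 < opNorm A :=
  zero_lt_one.trans_le (one_le_opNorm hA)

lemma eNorm_mul_inv_opNorm_le {A : Matrix (Fin 2) (Fin 2) ℝ} (hA : A.det = 1) (u : Fin 2 → ℝ) :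
    eNorm u * (opNorm A)⁻¹ ≤ eNorm (A *ᵥ u) := by
  rw [← div_eq_mul_inv, div_le_iff₀ (opNorm_pos hA), mul_comm]
  exact eNorm_le_opNorm_mul_eNorm_mulVec hA u

lemma det_mul_inv_eq_one {A A' : Matrix (Fin 2) (Fin 2) ℝ} (hA : A.det = 1) (hA' : A'.det = 1) :
    (A' * A⁻¹).det = 1 := by
  simp [det_nonsing_inv, hA, hA']

theorem abs_cross_le_of_isContractingDir {A A' : Matrix (Fin 2) (Fin 2) ℝ} {v w : Fin 2 → ℝ}
    (hA : A.det = 1) (hA' : A'.det = 1) (hv : IsContractingDir A v)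
    (hw : IsContractingDir A' w) :
    |cross v w| ≤ opNorm (A' * A⁻¹) * (opNorm A)⁻¹ * (opNorm A')⁻¹ := by
  have hstep : (A' * A⁻¹) *ᵥ (A *ᵥ w) = A' *ᵥ w := by
    rw [mulVec_mulVec, nonsing_inv_mul_cancel_right A' (A := A) (by simp [hA])]
  have h : opNorm A * |cross v w| ≤ opNorm (A' * A⁻¹) * (opNorm A')⁻¹ :=
    calc opNorm A * |cross v w| ≤ eNorm (A *ᵥ w) := hv.2.2 w
      _ ≤ opNorm (A' * A⁻¹) * eNorm (A' *ᵥ w) := by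
          rw [← hstep]
          exact eNorm_le_opNorm_mul_eNorm_mulVec (det_mul_inv_eq_one hA hA') _
      _ ≤ opNorm (A' * A⁻¹) * (opNorm A')⁻¹ :=
          mul_le_mul_of_nonneg_left hw.2.1 (opNorm_nonneg _)
  rwa [mul_right_comm, le_mul_inv_iff₀ (opNorm_pos hA), mul_comm]

section AlignSigns

variable {ι : Type*} [Fintype ι]

/-- Consecutive terms make a non-obtuse angle, which turns a convergent sequence of lines into a
convergent sequence of vectors. -/
noncomputable def alignSigns (V : ℕ → ι → ℝ) : ℕ → ι → ℝ
  | 0 => V 0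
  | n + 1 => if alignSigns V n ⬝ᵥ V (n + 1) < 0 then -V (n + 1) else V (n + 1)

lemma alignSigns_eq_or_eq_neg (V : ℕ → ι → ℝ) (n : ℕ) :
    alignSigns V n = V n ∨ alignSigns V n = -V n := by
  cases n with
  | zero => exact Or.inl rfl
  | succ n =>
    simp only [alignSigns]
    split_ifs <;> simp

lemma dotProduct_alignSigns_succ_nonneg (V : ℕ → ι → ℝ) (n : ℕ) :
    0 ≤ alignSigns V n ⬝ᵥ alignSigns V (n + 1) := by
  simp only [alignSigns]
  split_ifs with h
  · rw [dotProduct_neg]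
    linarith
  · exact not_lt.1 h

end AlignSigns

section ExpGrowth

/-- `limsup (log |f n|) / n ≤ a`, in a form whose multiplicative constants are absorbed by `=O`. -/
def ExpGrowthLE (f : ℕ → ℝ) (a : ℝ) : Prop :=
  ∀ δ > 0, f =O[atTop] fun n : ℕ => exp ((a + δ) * n)

lemma isBigO_exp_mul_natCast {a b : ℝ} (h : a ≤ b) :
    (fun n : ℕ => exp (a * n)) =O[atTop] fun n : ℕ => exp (b * n) :=
  IsBigO.of_bound 1 <| Eventually.of_forall fun n => by
    simp only [norm_eq_abs, abs_exp, one_mul]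
    exact exp_le_exp.2 (mul_le_mul_of_nonneg_right h n.cast_nonneg)

namespace ExpGrowthLE

variable {f g : ℕ → ℝ} {a b : ℝ}

lemma mono (hf : ExpGrowthLE f a) (h : a ≤ b) : ExpGrowthLE f b := fun δ hδ =>
  (hf δ hδ).trans (isBigO_exp_mul_natCast (by linarith))

lemma of_isBigO (hg : ExpGrowthLE g a) (hfg : f =O[atTop] g) : ExpGrowthLE f a := fun δ hδ =>
  hfg.trans (hg δ hδ)

lemma add (hf : ExpGrowthLE f a) (hg : ExpGrowthLE g a) : ExpGrowthLE (f + g) a := fun δ hδ =>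
  (hf δ hδ).add (hg δ hδ)

lemma mul (hf : ExpGrowthLE f a) (hg : ExpGrowthLE g b) : ExpGrowthLE (f * g) (a + b) :=
  fun δ hδ => ((hf (δ / 2) (half_pos hδ)).mul (hg (δ / 2) (half_pos hδ))).congr_right
    fun n => by rw [← exp_add]; ring_nf

lemma comp_add_one (hf : ExpGrowthLE f a) : ExpGrowthLE (fun n => f (n + 1)) a := fun δ hδ =>
  ((hf δ hδ).comp_tendsto (tendsto_add_atTop_nat 1)).trans <|
    (isBigO_const_mul_self (exp (a + δ)) _ _).congr_left fun n => by
      simp only [Function.comp_apply, Nat.cast_succ, ← exp_add]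
      ring_nf

lemma exists_le (hf : ExpGrowthLE f a) {ε : ℝ} (hε : 0 < ε) :
    ∃ C > 0, ∀ n : ℕ, |f n| ≤ C * exp ((a + ε) * n) := by
  obtain ⟨C, hC, h⟩ := bound_of_isBigO_nat_atTop (hf ε hε)
  exact ⟨C, hC, fun n => by simpa using h (exp_pos _).ne'⟩

end ExpGrowthLE

variable {f g : ℕ → ℝ} {a : ℝ}

lemma expGrowthLE_of_tendsto (hf : ∀ᶠ n in atTop, 0 < f n)
    (h : Tendsto (fun n : ℕ => (1 / (n : ℝ)) * log (f n)) atTop (𝓝 a)) : ExpGrowthLE f a :=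
  fun δ hδ => IsBigO.of_bound 1 <| by
    filter_upwards [hf, h.eventually (gt_mem_nhds (lt_add_of_pos_right a hδ)),
      eventually_gt_atTop 0] with n hpos hlt hn
    have hn' : (0 : ℝ) < n := by exact_mod_cast hn
    rw [one_div, inv_mul_lt_iff₀ hn'] at hlt
    rw [norm_of_nonneg hpos.le, norm_of_nonneg (exp_pos _).le, one_mul]
    calc f n = exp (log (f n)) := (exp_log hpos).symm
      _ ≤ exp ((a + δ) * n) := exp_le_exp.2 (by linarith)

lemma tendsto_inv_mul_log_inv
    (h : Tendsto (fun n : ℕ => (1 / (n : ℝ)) * log (f n)) atTop (𝓝 a)) :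
    Tendsto (fun n : ℕ => (1 / (n : ℝ)) * log (f n)⁻¹) atTop (𝓝 (-a)) := by
  simpa only [log_inv, mul_neg] using h.neg

lemma tendsto_inv_mul_log_const_mul {c : ℝ} (hc : 0 < c) (hf : ∀ᶠ n in atTop, 0 < f n)
    (h : Tendsto (fun n : ℕ => (1 / (n : ℝ)) * log (f n)) atTop (𝓝 a)) :
    Tendsto (fun n : ℕ => (1 / (n : ℝ)) * log (c * f n)) atTop (𝓝 a) := by
  have h0 : Tendsto (fun n : ℕ => (1 / (n : ℝ)) * log c) atTop (𝓝 0) := by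
    simpa using tendsto_one_div_atTop_nhds_zero_nat.mul_const (log c)
  have hsum := h0.add h
  rw [zero_add] at hsum
  refine hsum.congr' ?_
  filter_upwards [hf] with n hn
  rw [log_mul hc.ne' hn.ne', mul_add]

theorem tendsto_inv_mul_log_of_expGrowthLE (hf : ExpGrowthLE f a) (hg : ∀ᶠ n in atTop, 0 < g n)
    (hgf : ∀ᶠ n in atTop, g n ≤ f n)
    (h : Tendsto (fun n : ℕ => (1 / (n : ℝ)) * log (g n)) atTop (𝓝 a)) :
    Tendsto (fun n : ℕ => (1 / (n : ℝ)) * log (f n)) atTop (𝓝 a) := by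
  refine tendsto_order.2 ⟨fun b hb => ?_, fun b hb => ?_⟩
  · filter_upwards [h.eventually (lt_mem_nhds hb), hg, hgf] with n hlt hpos hle
    exact hlt.trans_le (mul_le_mul_of_nonneg_left (log_le_log hpos hle) (by positivity))
  · set ε := (b - a) / 2 with hε
    obtain ⟨C, hC, hbound⟩ := hf.exists_le (half_pos (sub_pos.2 hb))
    have hlim : Tendsto (fun n : ℕ => (1 / (n : ℝ)) * log C + (a + ε)) atTop (𝓝 (a + ε)) := by
      simpa using (tendsto_one_div_atTop_nhds_zero_nat.mul_const (log C)).add_const (a + ε)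
    filter_upwards [hlim.eventually (gt_mem_nhds (by linarith [hε] : a + ε < b)), hg, hgf,
      eventually_gt_atTop 0] with n hlt hpos hle hn
    have hn' : (0 : ℝ) < n := by exact_mod_cast hn
    refine lt_of_le_of_lt ?_ hlt
    calc (1 / (n : ℝ)) * log (f n) ≤ (1 / n) * log (C * exp ((a + ε) * n)) := by
          gcongr
          · exact hpos.trans_le hle
          · exact (le_abs_self _).trans (hbound n)
      _ = (1 / n) * log C + (a + ε) := by
          rw [log_mul hC.ne' (exp_pos _).ne', log_exp]
          field_simp

theorem exists_tendsto_of_expGrowthLE_dist {X : Type*} [PseudoMetricSpace X] [CompleteSpace X]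
    {x : ℕ → X} (ha : a < 0) (h : ExpGrowthLE (fun n => dist (x n) (x (n + 1))) a) :
    ∃ L, Tendsto x atTop (𝓝 L) ∧ ExpGrowthLE (fun n => dist (x n) L) a := by
  have hgeom : ∀ δ > 0, ∃ C, ∀ n, dist (x n) (x (n + 1)) ≤ C * exp (a + δ) ^ n := fun δ hδ => by
    obtain ⟨C, -, hC⟩ := h.exists_le hδ
    exact ⟨C, fun n => by simpa [← exp_nat_mul, mul_comm] using hC n⟩
  obtain ⟨C, hC⟩ := hgeom (-a / 2) (by linarith)
  obtain ⟨L, hL⟩ := cauchySeq_tendsto_of_complete <|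
    cauchySeq_of_le_geometric _ C (exp_lt_one_iff.2 (by linarith)) hC
  refine ⟨L, hL, fun δ hδ => ?_⟩
  set δ' := min δ (-a / 2)
  have hδ' : 0 < δ' := lt_min hδ (by linarith)
  have hr : exp (a + δ') < 1 := exp_lt_one_iff.2 (by linarith [min_le_right δ (-a / 2)])
  obtain ⟨C', hC'⟩ := hgeom δ' hδ'
  refine IsBigO.trans ?_ (isBigO_exp_mul_natCast (a := a + δ') (by linarith [min_le_left δ (-a / 2)]))
  refine IsBigO.of_bound (C' / (1 - exp (a + δ'))) (Eventually.of_forall fun n => ?_)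
  rw [norm_of_nonneg dist_nonneg, norm_of_nonneg (exp_pos _).le, mul_comm (a + δ'), exp_nat_mul,
    div_mul_eq_mul_div]
  exact dist_le_of_le_geometric_of_tendsto _ C' hr hC' hL n

end ExpGrowth

section Cocycle

variable {U : ℕ → Matrix (Fin 2) (Fin 2) ℝ} {γ : ℝ}

lemma nonneg_of_tendsto_inv_mul_log_opNorm (hdet : ∀ n, (U n).det = 1)
    (hγ : Tendsto (fun n : ℕ => (1 / (n : ℝ)) * log (opNorm (U n))) atTop (𝓝 γ)) : 0 ≤ γ :=
  ge_of_tendsto' hγ fun n => mul_nonneg (by positivity) (log_nonneg (one_le_opNorm (hdet n)))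

lemma expGrowthLE_opNorm (hdet : ∀ n, (U n).det = 1)
    (hγ : Tendsto (fun n : ℕ => (1 / (n : ℝ)) * log (opNorm (U n))) atTop (𝓝 γ)) :
    ExpGrowthLE (fun n => opNorm (U n)) γ :=
  expGrowthLE_of_tendsto (Eventually.of_forall fun n => opNorm_pos (hdet n)) hγ

lemma expGrowthLE_inv_opNorm (hdet : ∀ n, (U n).det = 1)
    (hγ : Tendsto (fun n : ℕ => (1 / (n : ℝ)) * log (opNorm (U n))) atTop (𝓝 γ)) :
    ExpGrowthLE (fun n => (opNorm (U n))⁻¹) (-γ) :=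
  expGrowthLE_of_tendsto (Eventually.of_forall fun n => inv_pos.2 (opNorm_pos (hdet n)))
    (tendsto_inv_mul_log_inv hγ)

lemma expGrowthLE_eNorm_mulVec (hdet : ∀ n, (U n).det = 1)
    (hγ : Tendsto (fun n : ℕ => (1 / (n : ℝ)) * log (opNorm (U n))) atTop (𝓝 γ))
    (F : Fin 2 → ℝ) : ExpGrowthLE (fun n => eNorm (U n *ᵥ F)) γ :=
  (expGrowthLE_opNorm hdet hγ).of_isBigO <| IsBigO.of_bound (eNorm F) <|
    Eventually.of_forall fun n => by
      rw [norm_of_nonneg (eNorm_nonneg _), norm_of_nonneg (opNorm_nonneg _), mul_comm]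
      exact eNorm_mulVec_le _ _

lemma tendsto_inv_mul_log_eNorm_mulVec_of_expGrowthLE (hdet : ∀ n, (U n).det = 1)
    (hγ : Tendsto (fun n : ℕ => (1 / (n : ℝ)) * log (opNorm (U n))) atTop (𝓝 γ))
    {F : Fin 2 → ℝ} (hF : F ≠ 0) (h : ExpGrowthLE (fun n => eNorm (U n *ᵥ F)) (-γ)) :
    Tendsto (fun n : ℕ => (1 / (n : ℝ)) * log (eNorm (U n *ᵥ F))) atTop (𝓝 (-γ)) := by
  have hF' : 0 < eNorm F := (eNorm_nonneg F).lt_of_ne' (eNorm_ne_zero hF)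
  have hinv : ∀ᶠ n in atTop, 0 < (opNorm (U n))⁻¹ :=
    Eventually.of_forall fun n => inv_pos.2 (opNorm_pos (hdet n))
  exact tendsto_inv_mul_log_of_expGrowthLE h (hinv.mono fun n hn => mul_pos hF' hn)
    (Eventually.of_forall fun n => eNorm_mul_inv_opNorm_le (hdet n) F)
    (tendsto_inv_mul_log_const_mul hF' hinv (tendsto_inv_mul_log_inv hγ))

lemma tendsto_inv_mul_log_eNorm_mulVec_of_le (hdet : ∀ n, (U n).det = 1)
    (hγ : Tendsto (fun n : ℕ => (1 / (n : ℝ)) * log (opNorm (U n))) atTop (𝓝 γ))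
    {F : Fin 2 → ℝ} {c : ℝ} (hc : 0 < c)
    (h : ∀ᶠ n in atTop, c * opNorm (U n) ≤ eNorm (U n *ᵥ F)) :
    Tendsto (fun n : ℕ => (1 / (n : ℝ)) * log (eNorm (U n *ᵥ F))) atTop (𝓝 γ) := by
  have hpos : ∀ᶠ n in atTop, 0 < opNorm (U n) := Eventually.of_forall fun n => opNorm_pos (hdet n)
  exact tendsto_inv_mul_log_of_expGrowthLE (expGrowthLE_eNorm_mulVec hdet hγ F)
    (hpos.mono fun n hn => mul_pos hc hn) h (tendsto_inv_mul_log_const_mul hc hpos hγ)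

lemma expGrowthLE_opNorm_step (hdet : ∀ n, (U n).det = 1)
    (hT : Tendsto (fun n : ℕ => (1 / (n : ℝ)) * log (opNorm (U n * (U (n - 1))⁻¹))) atTop (𝓝 0)) :
    ExpGrowthLE (fun n => opNorm (U (n + 1) * (U n)⁻¹)) 0 := by
  simpa using (expGrowthLE_of_tendsto (Eventually.of_forall fun n =>
    opNorm_pos (det_mul_inv_eq_one (hdet (n - 1)) (hdet n))) hT).comp_add_one

theorem exists_tendsto_isContractingDir (hdet : ∀ n, (U n).det = 1)
    (hγ : Tendsto (fun n : ℕ => (1 / (n : ℝ)) * log (opNorm (U n))) atTop (𝓝 γ))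
    (hT : Tendsto (fun n : ℕ => (1 / (n : ℝ)) * log (opNorm (U n * (U (n - 1))⁻¹))) atTop (𝓝 0))
    (hγpos : 0 < γ) :
    ∃ W : ℕ → Fin 2 → ℝ, (∀ n, IsContractingDir (U n) (W n)) ∧ ∃ F₀, Tendsto W atTop (𝓝 F₀) ∧
      ExpGrowthLE (fun n => eNorm (W n - F₀)) (-2 * γ) := by
  choose V hV using fun n => exists_isContractingDir (hdet n)
  have hW : ∀ n, IsContractingDir (U n) (alignSigns V n) := fun n => by
    rcases alignSigns_eq_or_eq_neg V n with h | h <;> rw [h]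
    exacts [hV n, (hV n).neg]
  set W := alignSigns V
  have hangle : ExpGrowthLE (fun n => opNorm (U (n + 1) * (U n)⁻¹) * (opNorm (U n))⁻¹ *
      (opNorm (U (n + 1)))⁻¹) (-2 * γ) :=
    (((expGrowthLE_opNorm_step hdet hT).mul (expGrowthLE_inv_opNorm hdet hγ)).mul
      (expGrowthLE_inv_opNorm hdet hγ).comp_add_one).mono (by linarith)
  have hstep : ExpGrowthLE (fun n => dist (WithLp.toLp 2 (W n) : EuclideanSpace ℝ (Fin 2))
      (WithLp.toLp 2 (W (n + 1)))) (-2 * γ) := by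
    refine hangle.of_isBigO (IsBigO.of_bound 2 (Eventually.of_forall fun n => ?_))
    rw [dist_toLp, norm_of_nonneg (eNorm_nonneg _), norm_eq_abs]
    calc eNorm (W n - W (n + 1)) ≤ 2 * |cross (W n) (W (n + 1))| :=
          eNorm_sub_le_two_mul_abs_cross (hW n).1 (hW (n + 1)).1
            (dotProduct_alignSigns_succ_nonneg V n)
      _ ≤ 2 * |_| := mul_le_mul_of_nonneg_left ((abs_cross_le_of_isContractingDir (hdet n)
          (hdet (n + 1)) (hW n) (hW (n + 1))).trans (le_abs_self _)) zero_le_two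
  obtain ⟨L, hL, hLrate⟩ := exists_tendsto_of_expGrowthLE_dist (by linarith) hstep
  refine ⟨W, hW, WithLp.ofLp L, ((PiLp.continuous_ofLp 2 _).tendsto L).comp hL, ?_⟩
  simpa only [← dist_toLp, WithLp.toLp_ofLp] using hLrate

def IsStableDir (U : ℕ → Matrix (Fin 2) (Fin 2) ℝ) (γ : ℝ) (F₀ : Fin 2 → ℝ) : Prop :=
  F₀ ≠ 0 ∧ ExpGrowthLE (fun n => eNorm (U n *ᵥ F₀)) (-γ) ∧
    ∀ F, (∀ c : ℝ, F ≠ c • F₀) →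
      Tendsto (fun n : ℕ => (1 / (n : ℝ)) * log (eNorm (U n *ᵥ F))) atTop (𝓝 γ)

theorem exists_isStableDir_of_eq_zero (hdet : ∀ n, (U n).det = 1)
    (hγ : Tendsto (fun n : ℕ => (1 / (n : ℝ)) * log (opNorm (U n))) atTop (𝓝 0)) :
    ∃ F₀, IsStableDir U 0 F₀ := by
  refine ⟨![1, 0], fun h => by simpa using congrFun h 0, by
    rw [neg_zero]; exact expGrowthLE_eNorm_mulVec hdet hγ _, fun F hF => ?_⟩
  have hF0 : F ≠ 0 := by simpa using hF 0
  rw [← neg_zero]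
  exact tendsto_inv_mul_log_eNorm_mulVec_of_expGrowthLE hdet hγ hF0
    (by rw [neg_zero]; exact expGrowthLE_eNorm_mulVec hdet hγ F)

lemma expGrowthLE_eNorm_mulVec_of_isContractingDir (hdet : ∀ n, (U n).det = 1)
    (hγ : Tendsto (fun n : ℕ => (1 / (n : ℝ)) * log (opNorm (U n))) atTop (𝓝 γ))
    {W : ℕ → Fin 2 → ℝ} {F₀ : Fin 2 → ℝ} (hW : ∀ n, IsContractingDir (U n) (W n))
    (hrate : ExpGrowthLE (fun n => eNorm (W n - F₀)) (-2 * γ)) :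
    ExpGrowthLE (fun n => eNorm (U n *ᵥ F₀)) (-γ) := by
  have hsum : ExpGrowthLE ((fun n => (opNorm (U n))⁻¹) +
      (fun n => opNorm (U n)) * fun n => eNorm (W n - F₀)) (-γ) :=
    (expGrowthLE_inv_opNorm hdet hγ).add (((expGrowthLE_opNorm hdet hγ).mul hrate).mono
      (by linarith))
  refine hsum.of_isBigO (IsBigO.of_bound 1 (Eventually.of_forall fun n => ?_))
  rw [one_mul, norm_of_nonneg (eNorm_nonneg _), norm_eq_abs]
  refine le_trans ?_ (le_abs_self _)
  calc eNorm (U n *ᵥ F₀) = eNorm (U n *ᵥ W n + U n *ᵥ (F₀ - W n)) := by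
        rw [← mulVec_add, add_sub_cancel]
    _ ≤ eNorm (U n *ᵥ W n) + eNorm (U n *ᵥ (F₀ - W n)) := eNorm_add_le _ _
    _ ≤ (opNorm (U n))⁻¹ + opNorm (U n) * eNorm (W n - F₀) := by
        rw [eNorm_sub_comm]
        exact add_le_add (hW n).2.1 (eNorm_mulVec_le _ _)

lemma eventually_mul_opNorm_le_eNorm_mulVec {W : ℕ → Fin 2 → ℝ} {F₀ F : Fin 2 → ℝ}
    (hW : ∀ n, IsContractingDir (U n) (W n)) (hlim : Tendsto W atTop (𝓝 F₀))
    (hF : cross F₀ F ≠ 0) :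
    ∀ᶠ n in atTop, |cross F₀ F| / 2 * opNorm (U n) ≤ eNorm (U n *ᵥ F) := by
  have hc : Tendsto (fun n => |cross (W n) F|) atTop (𝓝 |cross F₀ F|) :=
    ((continuous_abs.comp (continuous_cross_left F)).tendsto F₀).comp hlim
  filter_upwards [hc.eventually (lt_mem_nhds (half_lt_self (abs_pos.2 hF)))] with n hn
  calc |cross F₀ F| / 2 * opNorm (U n) ≤ opNorm (U n) * |cross (W n) F| := by
        rw [mul_comm]
        exact mul_le_mul_of_nonneg_left hn.le (opNorm_nonneg _)
    _ ≤ eNorm (U n *ᵥ F) := (hW n).2.2 F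

theorem exists_isStableDir_of_pos (hdet : ∀ n, (U n).det = 1)
    (hγ : Tendsto (fun n : ℕ => (1 / (n : ℝ)) * log (opNorm (U n))) atTop (𝓝 γ))
    (hT : Tendsto (fun n : ℕ => (1 / (n : ℝ)) * log (opNorm (U n * (U (n - 1))⁻¹))) atTop (𝓝 0))
    (hγpos : 0 < γ) : ∃ F₀, IsStableDir U γ F₀ := by
  obtain ⟨W, hW, F₀, hlim, hrate⟩ := exists_tendsto_isContractingDir hdet hγ hT hγpos
  have hF₀ : eNorm F₀ = 1 :=
    tendsto_nhds_unique ((continuous_eNorm.tendsto F₀).comp hlim)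
      (tendsto_const_nhds.congr fun n => (hW n).1.symm)
  refine ⟨F₀, fun h => by simp [h, eNorm] at hF₀,
    expGrowthLE_eNorm_mulVec_of_isContractingDir hdet hγ hW hrate, fun F hF => ?_⟩
  have hcross : cross F₀ F ≠ 0 := fun h => hF _ (eq_smul_of_cross_eq_zero hF₀ h)
  exact tendsto_inv_mul_log_eNorm_mulVec_of_le hdet hγ (half_pos (abs_pos.2 hcross))
    (eventually_mul_opNorm_le_eNorm_mulVec hW hlim hcross)

end Cocycle

/-- Deterministic Oseledec theorem in dimension 2 (Theorem 3.6): if `U(n) ∈ SL₂(ℝ)` with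
`(1/n) log ‖U(n)‖ → γ` and `(1/n) log ‖U(n) U(n-1)⁻¹‖ → 0` (with `U(0) = I`), then there
is a nonzero `F₀` with `(1/n) log |U(n) F₀| → -γ`, every `F` not a multiple of `F₀`
satisfies `(1/n) log |U(n) F| → γ`, and for all `ε > 0` there is `C(ε) > 0` with
`|U(n) F₀| ≤ C(ε) e^{-(γ-ε)n}` for `n ≥ 1`. -/
theorem oseledec_dim_two
    (U : ℕ → Matrix (Fin 2) (Fin 2) ℝ) (γ : ℝ)
    (hU0 : U 0 = 1)
    (hdet : ∀ n : ℕ, 1 ≤ n → (U n).det = 1)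
    (hγ : Filter.Tendsto (fun n : ℕ => (1 / (n : ℝ)) * Real.log (opNorm (U n)))
      Filter.atTop (nhds γ))
    (hT : Filter.Tendsto (fun n : ℕ => (1 / (n : ℝ)) * Real.log (opNorm (U n * (U (n - 1))⁻¹)))
      Filter.atTop (nhds 0)) :
    ∃ F₀ : Fin 2 → ℝ, F₀ ≠ 0 ∧
      Filter.Tendsto (fun n : ℕ => (1 / (n : ℝ)) * Real.log (eNorm ((U n).mulVec F₀)))
        Filter.atTop (nhds (-γ)) ∧
      (∀ F : Fin 2 → ℝ, (∀ c : ℝ, F ≠ c • F₀) →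
        Filter.Tendsto (fun n : ℕ => (1 / (n : ℝ)) * Real.log (eNorm ((U n).mulVec F)))
          Filter.atTop (nhds γ)) ∧
      (∀ ε : ℝ, 0 < ε → ∃ C : ℝ, 0 < C ∧ ∀ n : ℕ, 1 ≤ n →
        eNorm ((U n).mulVec F₀) ≤ C * Real.exp (-(γ - ε) * n)) := by
  have hdet' : ∀ n, (U n).det = 1 := fun n =>
    n.eq_zero_or_pos.elim (fun h => by rw [h, hU0, det_one]) (hdet n)
  obtain ⟨F₀, hF₀, hrate, hgeneric⟩ : ∃ F₀, IsStableDir U γ F₀ := by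
    rcases (nonneg_of_tendsto_inv_mul_log_opNorm hdet' hγ).eq_or_lt with rfl | hγpos
    · exact exists_isStableDir_of_eq_zero hdet' hγ
    · exact exists_isStableDir_of_pos hdet' hγ hT hγpos
  refine ⟨F₀, hF₀, tendsto_inv_mul_log_eNorm_mulVec_of_expGrowthLE hdet' hγ hF₀ hrate, hgeneric,
    fun ε hε => ?_⟩
  obtain ⟨C, hC, hbound⟩ := hrate.exists_le hε
  refine ⟨C, hC, fun n _ => ?_⟩
  rw [neg_sub', sub_neg_eq_add, ← abs_of_nonneg (eNorm_nonneg _)]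
  exact hbound n
end

section
/- Common eigenvectors of random-length-model transfer matrices (Lemma 3.11): Fix b > 1, \mu > 0 and \ell_1, \ell_2 > 0, and set T(\ell) := D(b) \cdot R_\mu(\mu \ell). Assume both T(\ell_1) and T(\ell_2) are elliptic (|tr T(\ell_i)| < 2 for i = 1, 2). Then T(\ell_1) and T(\ell_2) have a common eigenvector in \mathbb{C}^2 \setminus \{0\} if and only if \sin(\mu(\ell_1 - \ell_2)) = 0, i.e. if and only if \mu(\ell_1 - \ell_2) \in \pi \mathbb{Z}. -/
/-- The dilation matrix `D(b) = diag(√b, 1/√b)`. -/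
noncomputable def Dmat (b : ℝ) : Matrix (Fin 2) (Fin 2) ℝ :=
  !![Real.sqrt b, 0; 0, 1 / Real.sqrt b]

/-- The rotation matrix `R_μ(φ)`. -/
noncomputable def Rmat (μ φ : ℝ) : Matrix (Fin 2) (Fin 2) ℝ :=
  !![Real.cos φ, Real.sin φ / μ; -(μ * Real.sin φ), Real.cos φ]

/-- The complexification of a real 2×2 matrix. -/
def cmap (A : Matrix (Fin 2) (Fin 2) ℝ) : Matrix (Fin 2) (Fin 2) ℂ :=
  A.map (fun x => (x : ℂ))


lemma Tmat_eq (b μ φ : ℝ) :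
    Dmat b * Rmat μ φ =
      !![Real.sqrt b * Real.cos φ, Real.sqrt b * (Real.sin φ / μ);
        1 / Real.sqrt b * (-(μ * Real.sin φ)), 1 / Real.sqrt b * Real.cos φ] := by
  rw [Dmat, Rmat, Matrix.mul_fin_two]
  norm_num

lemma cmap_fin_two (a b c d : ℝ) : cmap !![a,b;c,d] = !![(a:ℂ),(b:ℂ);(c:ℂ),(d:ℂ)] := by
  ext i j
  fin_cases i <;> fin_cases j <;> simp [cmap]

lemma mulVec_two_iff (a b c d : ℂ) (v : Fin 2 → ℂ) (lam : ℂ) :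
    (!![a,b;c,d] : Matrix (Fin 2) (Fin 2) ℂ).mulVec v = lam • v ↔
      (a * v 0 + b * v 1 = lam * v 0 ∧ c * v 0 + d * v 1 = lam * v 1) := by
  constructor
  · intro h
    constructor
    · simpa [Matrix.mulVec, dotProduct, Fin.sum_univ_two] using congrFun h 0
    · simpa [Matrix.mulVec, dotProduct, Fin.sum_univ_two] using congrFun h 1
  · rintro ⟨h0, h1⟩
    funext i
    fin_cases i <;>
      simp [Matrix.mulVec, dotProduct, Fin.sum_univ_two, h0, h1]

lemma quad_root (a B C : ℂ) (ha : a ≠ 0) : ∃ r : ℂ, a * r ^ 2 + B * r + C = 0 := by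
  obtain ⟨r, hr⟩ := Complex.isAlgClosed.exists_root
    (p := Polynomial.C a * Polynomial.X ^ 2 + Polynomial.C B * Polynomial.X + Polynomial.C C)
    (by rw [Polynomial.degree_quadratic ha]; norm_num)
  refine ⟨r, ?_⟩
  simpa [Polynomial.IsRoot] using hr

lemma vec_ne_zero (v : Fin 2 → ℂ) (h : v ≠ 0) : v 0 ≠ 0 ∨ v 1 ≠ 0 := by
  by_contra hc
  push_neg at hc
  exact h (funext fun i => by fin_cases i <;> simp [hc.1, hc.2])

lemma sin_ne_zero_of_elliptic (b μ φ : ℝ) (hb : 1 < b)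
    (h : |(Dmat b * Rmat μ φ).trace| < 2) : Real.sin φ ≠ 0 := by
  have hβ : 1 < Real.sqrt b := by
    rw [show (1:ℝ) = Real.sqrt 1 by simp]
    exact Real.sqrt_lt_sqrt (by norm_num) hb
  have htr : (Dmat b * Rmat μ φ).trace
      = (Real.sqrt b + 1 / Real.sqrt b) * Real.cos φ := by
    rw [Tmat_eq, Matrix.trace_fin_two]
    simp [Matrix.cons_val_zero, Matrix.cons_val_one]
    ring
  intro hs
  have hpos : 0 < Real.sqrt b := lt_trans one_pos hβ
  have hinv : 1 / Real.sqrt b * Real.sqrt b = 1 := by field_simp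
  rcases Real.sin_eq_zero_iff_cos_eq.mp hs with hc | hc <;>
    rw [htr, hc] at h <;> rw [abs_lt] at h <;>
    nlinarith [h.1, h.2, hinv, hpos, mul_pos (sub_pos.mpr hβ) (sub_pos.mpr hβ)]

/-- Two real 2×2 matrices, regarded as complex matrices acting on `ℂ²`, have a common
eigenvector: a nonzero `v : ℂ²` with `A v = λ v` and `B v = λ' v`. -/
def HasCommonEigenvector (A B : Matrix (Fin 2) (Fin 2) ℝ) : Prop :=
  ∃ (v : Fin 2 → ℂ) (lam lam' : ℂ), v ≠ 0 ∧
    (cmap A).mulVec v = lam • v ∧ (cmap B).mulVec v = lam' • v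

/-- Lemma 3.11 (common eigenvectors of random-length-model transfer matrices):
for `b > 1`, `μ > 0`, `ℓ₁, ℓ₂ > 0` with both `T(ℓᵢ) = D(b) R_μ(μ ℓᵢ)` elliptic,
`T(ℓ₁)` and `T(ℓ₂)` have a common eigenvector in `ℂ² \ {0}` iff `sin(μ(ℓ₁ - ℓ₂)) = 0`,
i.e. iff `μ(ℓ₁ - ℓ₂) ∈ π ℤ`. -/
theorem rlm_common_eigenvector_iff
    (b μ ℓ₁ ℓ₂ : ℝ) (hb : 1 < b) (hμ : 0 < μ) (hℓ₁ : 0 < ℓ₁) (hℓ₂ : 0 < ℓ₂)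
    (hell₁ : |(Dmat b * Rmat μ (μ * ℓ₁)).trace| < 2)
    (hell₂ : |(Dmat b * Rmat μ (μ * ℓ₂)).trace| < 2) :
    (HasCommonEigenvector (Dmat b * Rmat μ (μ * ℓ₁)) (Dmat b * Rmat μ (μ * ℓ₂)) ↔
      Real.sin (μ * (ℓ₁ - ℓ₂)) = 0) ∧
    (Real.sin (μ * (ℓ₁ - ℓ₂)) = 0 ↔ ∃ k : ℤ, μ * (ℓ₁ - ℓ₂) = k * Real.pi) := by
  have hs₁ := sin_ne_zero_of_elliptic b μ (μ * ℓ₁) hb hell₁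
  have hs₂ := sin_ne_zero_of_elliptic b μ (μ * ℓ₂) hb hell₂
  have hβ : 1 < Real.sqrt b := by
    rw [show (1:ℝ) = Real.sqrt 1 by simp]
    exact Real.sqrt_lt_sqrt (by norm_num) hb
  have hβ0 : Real.sqrt b ≠ 0 := ne_of_gt (lt_trans one_pos hβ)
  have hβc : (Real.sqrt b : ℂ) ≠ 0 := by exact_mod_cast hβ0
  have hμc : (μ : ℂ) ≠ 0 := by exact_mod_cast ne_of_gt hμ
  have hs₁c : (Real.sin (μ * ℓ₁) : ℂ) ≠ 0 := by exact_mod_cast hs₁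
  have hs₂c : (Real.sin (μ * ℓ₂) : ℂ) ≠ 0 := by exact_mod_cast hs₂
  have hβ2 : ((Real.sqrt b : ℂ))^2 - 1 ≠ 0 := by
    have : ((Real.sqrt b : ℝ))^2 - 1 ≠ 0 := by nlinarith
    push_cast at this ⊢
    exact_mod_cast this
  constructor
  · constructor
    · rintro ⟨v, lam, lam', hv, h1, h2⟩
      rw [Tmat_eq, cmap_fin_two, mulVec_two_iff] at h1 h2
      obtain ⟨E1, E2⟩ := h1
      obtain ⟨E3, E4⟩ := h2
      simp only [Complex.ofReal_mul, Complex.ofReal_div, Complex.ofReal_neg,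
        Complex.ofReal_one] at E1 E2 E3 E4
      set β : ℂ := (Real.sqrt b : ℂ) with hβdef
      set s₁ : ℂ := (Real.sin (μ * ℓ₁) : ℂ) with hs₁def
      set c₁ : ℂ := (Real.cos (μ * ℓ₁) : ℂ) with hc₁def
      set s₂ : ℂ := (Real.sin (μ * ℓ₂) : ℂ) with hs₂def
      set c₂ : ℂ := (Real.cos (μ * ℓ₂) : ℂ) with hc₂def
      set x : ℂ := v 0 with hxdef
      set y : ℂ := v 1 with hydef
      have Q₁ : β * (s₁ / μ) * y ^ 2 + (β - 1 / β) * c₁ * (x * y)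
          + 1 / β * μ * s₁ * x ^ 2 = 0 := by
        linear_combination y * E1 - x * E2
      have Q₂ : β * (s₂ / μ) * y ^ 2 + (β - 1 / β) * c₂ * (x * y)
          + 1 / β * μ * s₂ * x ^ 2 = 0 := by
        linear_combination y * E3 - x * E4
      have hβne : β - 1 / β ≠ 0 := by
        have h0 : Real.sqrt b - 1 / Real.sqrt b ≠ 0 := by
          have : 0 < Real.sqrt b - 1 / Real.sqrt b := by
            rw [sub_pos]
            calc 1 / Real.sqrt b < 1 := by
                  rw [div_lt_one (lt_trans one_pos hβ)]; exact hβ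
              _ < Real.sqrt b := hβ
          exact ne_of_gt this
        intro h
        apply h0
        have : ((Real.sqrt b - 1 / Real.sqrt b : ℝ) : ℂ) = 0 := by
          push_cast
          exact h
        exact_mod_cast this
      have hx : x ≠ 0 := by
        intro hx0
        apply hv
        have hy0 : y = 0 := by
          have h0 : β * (s₁ / μ) * y = 0 := by
            rw [hx0] at E1
            linear_combination E1
          have hne : β * (s₁ / μ) ≠ 0 :=
            mul_ne_zero hβc (div_ne_zero hs₁c hμc)
          exact (mul_eq_zero.mp h0).resolve_left hne
        funext i
        fin_cases i
        · exact hx0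
        · exact hy0
      have hy : y ≠ 0 := by
        intro hy0
        apply hx
        have h0 : 1 / β * μ * s₁ * x ^ 2 = 0 := by
          rw [hy0] at Q₁
          linear_combination Q₁
        have hne : 1 / β * μ * s₁ ≠ 0 :=
          mul_ne_zero (mul_ne_zero (div_ne_zero one_ne_zero hβc) hμc) hs₁c
        have := (mul_eq_zero.mp h0).resolve_left hne
        exact pow_eq_zero_iff (by norm_num) |>.mp this
      have key : (β - 1 / β) * (c₁ * s₂ - c₂ * s₁) * (x * y) = 0 := by
        linear_combination s₂ * Q₁ - s₁ * Q₂
      have h0 : c₁ * s₂ - c₂ * s₁ = 0 := by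
        rcases mul_eq_zero.mp key with h | h
        · rcases mul_eq_zero.mp h with h | h
          · exact absurd h hβne
          · exact h
        · exact absurd h (mul_ne_zero hx hy)
      have hR : Real.cos (μ * ℓ₁) * Real.sin (μ * ℓ₂)
          - Real.cos (μ * ℓ₂) * Real.sin (μ * ℓ₁) = 0 := by
        have : ((Real.cos (μ * ℓ₁) * Real.sin (μ * ℓ₂)
            - Real.cos (μ * ℓ₂) * Real.sin (μ * ℓ₁) : ℝ) : ℂ) = 0 := by
          rw [Complex.ofReal_sub, Complex.ofReal_mul, Complex.ofReal_mul]
          exact h0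
        exact_mod_cast this
      have harg : μ * (ℓ₁ - ℓ₂) = μ * ℓ₁ - μ * ℓ₂ := by ring
      rw [harg, Real.sin_sub]
      linarith
    · intro hsin
      set εr : ℝ := Real.cos (μ * (ℓ₁ - ℓ₂)) with hεdef
      have hε2 : εr ^ 2 = 1 := by
        have := Real.sin_sq_add_cos_sq (μ * (ℓ₁ - ℓ₂))
        rw [hsin] at this
        nlinarith
      have harg : μ * ℓ₂ = μ * ℓ₁ - μ * (ℓ₁ - ℓ₂) := by ring
      have hs2 : Real.sin (μ * ℓ₂) = εr * Real.sin (μ * ℓ₁) := by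
        rw [harg, Real.sin_sub, hsin]
        ring
      have hc2 : Real.cos (μ * ℓ₂) = εr * Real.cos (μ * ℓ₁) := by
        rw [harg, Real.cos_sub, hsin]
        ring
      set β : ℂ := (Real.sqrt b : ℂ) with hβdef
      set s₁ : ℂ := (Real.sin (μ * ℓ₁) : ℂ) with hs₁def
      set c₁ : ℂ := (Real.cos (μ * ℓ₁) : ℂ) with hc₁def
      set ε : ℂ := (εr : ℂ) with hεcdef
      have hεc2 : ε ^ 2 = 1 := by
        rw [hεcdef]
        exact_mod_cast hε2
      have ha : β * (s₁ / μ) ≠ 0 := mul_ne_zero hβc (div_ne_zero hs₁c hμc)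
      obtain ⟨r, hQ⟩ := quad_root (β * (s₁ / μ)) ((β - 1 / β) * c₁) (1 / β * μ * s₁) ha
      set lam : ℂ := β * c₁ + β * (s₁ / μ) * r with hlamdef
      refine ⟨![1, r], lam, ε * lam, ?_, ?_, ?_⟩
      · intro h
        simpa using congrFun h 0
      · rw [Tmat_eq, cmap_fin_two, mulVec_two_iff]
        simp only [Complex.ofReal_mul, Complex.ofReal_div, Complex.ofReal_neg,
          Complex.ofReal_one, Matrix.cons_val_zero, Matrix.cons_val_one, Matrix.head_cons]
        constructor
        · rw [hlamdef]; ring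
        · linear_combination (-1 : ℂ) * hQ
      · rw [Tmat_eq, cmap_fin_two, mulVec_two_iff]
        simp only [Complex.ofReal_mul, Complex.ofReal_div, Complex.ofReal_neg,
          Complex.ofReal_one, Matrix.cons_val_zero, Matrix.cons_val_one, Matrix.head_cons]
        have hs2c : (Real.sin (μ * ℓ₂) : ℂ) = ε * s₁ := by
          rw [hs2, Complex.ofReal_mul]
        have hc2c : (Real.cos (μ * ℓ₂) : ℂ) = ε * c₁ := by
          rw [hc2, Complex.ofReal_mul]
        rw [hs2c, hc2c]
        constructor
        · rw [hlamdef]; ring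
        · linear_combination (-ε) * hQ
  · rw [Real.sin_eq_zero_iff]
    constructor
    · rintro ⟨n, hn⟩; exact ⟨n, hn.symm⟩
    · rintro ⟨n, hn⟩; exact ⟨n, hn.symm⟩
end

section
/- Common eigenvectors of random-Kirchhoff-model transfer matrices (Lemma 3.12): Fix b \ge 1, \mu > 0 and q_1, q_2 \in \mathbb{R}, and set T(q) := D(b) \cdot S(q) \cdot R_\mu(\mu). Assume both T(q_1) and T(q_2) are elliptic (|tr T(q_i)| < 2 for i = 1, 2); note this forces \sin\mu \ne 0. Then T(q_1) and T(q_2) have a common eigenvector in \mathbb{C}^2 \setminus \{0\} if and only if q_1 = q_2. -/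
/-- The shearing matrix `S(q)`. -/
def Smat (q : ℝ) : Matrix (Fin 2) (Fin 2) ℝ := !![1, 0; q, 1]

/-!
Write `w = R v` for a common eigenvector `v` of `D S(q₁) R` and `D S(q₂) R`. The vectors
`D S(qᵢ) w` are both multiples of `v`, hence parallel; as `det D ≠ 0`, so are `S(q₁) w` and
`S(q₂) w`, whose determinant is `(q₂ - q₁) w₀²`. So `q₁ ≠ q₂` forces `w₀ = 0`, and then
`λ v = D w` (with `λ ≠ 0` since the matrix is invertible) gives `v₀ = 0`, whence
`w₀ = (sin μ / μ) v₁ = 0` and `v = 0`. Ellipticity is needed only for `sin μ ≠ 0`: when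
`sin μ = 0` the trace is `± (√b + 1/√b)`.
-/

namespace Matrix

section CommRing

variable {K : Type*} [CommRing K]

def wedge (x y : Fin 2 → K) : K := x 0 * y 1 - x 1 * y 0

theorem wedge_mulVec (M : Matrix (Fin 2) (Fin 2) K) (x y : Fin 2 → K) :
    wedge (M *ᵥ x) (M *ᵥ y) = M.det * wedge x y := by
  simp only [wedge, mulVec, dotProduct, Fin.sum_univ_two, det_fin_two]
  ring

theorem wedge_smul_smul (a b : K) (v : Fin 2 → K) : wedge (a • v) (b • v) = 0 := by
  simp only [wedge, Pi.smul_apply, smul_eq_mul]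
  ring

theorem wedge_shear (q₁ q₂ : K) (w : Fin 2 → K) :
    wedge (!![1, 0; q₁, 1] *ᵥ w) (!![1, 0; q₂, 1] *ᵥ w) = (q₂ - q₁) * w 0 ^ 2 := by
  simp only [wedge, mulVec, dotProduct, Fin.sum_univ_two, of_apply, cons_val', cons_val_zero,
    cons_val_one, cons_val_fin_one]
  ring

end CommRing

theorem exists_mulVec_eq_smul {K n : Type*} [Field K] [IsAlgClosed K] [Fintype n]
    [DecidableEq n] [Nonempty n] (A : Matrix n n K) : ∃ v ≠ 0, ∃ c : K, A *ᵥ v = c • v := by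
  obtain ⟨c, hc⟩ := Module.End.exists_eigenvalue (toLin' A)
  obtain ⟨v, hv, hv0⟩ := hc.exists_hasEigenvector
  exact ⟨v, hv0, c, by simpa using Module.End.mem_eigenspace_iff.mp hv⟩

theorem eq_of_common_eigenvector_mul_shear_mul {K : Type*} [Field K]
    {D R : Matrix (Fin 2) (Fin 2) K} (hD₀₁ : D 0 1 = 0) (hD : D.det ≠ 0) (hR : R.det ≠ 0)
    (hR₀₁ : R 0 1 ≠ 0) {q₁ q₂ : K} {v : Fin 2 → K} (hv : v ≠ 0) {c₁ c₂ : K}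
    (h₁ : (D * !![1, 0; q₁, 1] * R) *ᵥ v = c₁ • v)
    (h₂ : (D * !![1, 0; q₂, 1] * R) *ᵥ v = c₂ • v) : q₁ = q₂ := by
  by_contra hq
  have hRv₀ : (R *ᵥ v) 0 = 0 := by
    have h := wedge_smul_smul c₁ c₂ v
    rw [← h₁, ← h₂, ← mulVec_mulVec, ← mulVec_mulVec, ← mulVec_mulVec, ← mulVec_mulVec,
      wedge_mulVec, wedge_shear] at h
    simpa [hD, sub_eq_zero, Ne.symm hq] using h
  have hRv : R 0 0 * v 0 + R 0 1 * v 1 = 0 := by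
    simpa [mulVec, dotProduct, Fin.sum_univ_two] using hRv₀
  have hc₁ : c₁ ≠ 0 := by
    rintro rfl
    have hdet : (D * !![1, 0; q₁, 1] * R).det ≠ 0 := by
      simpa [det_fin_two_of] using mul_ne_zero hD hR
    exact hdet (exists_mulVec_eq_zero_iff.mp ⟨v, hv, by rw [h₁, zero_smul]⟩)
  have hv₀ : v 0 = 0 := by
    have h := congrFun h₁ 0
    rw [← mulVec_mulVec, ← mulVec_mulVec] at h
    simpa [mulVec, dotProduct, Fin.sum_univ_two, hD₀₁, hRv, hc₁, eq_comm] using h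
  have hv₁ : v 1 = 0 := by simpa [hv₀, hR₀₁] using hRv
  exact hv (by ext i; fin_cases i <;> assumption)

end Matrix

open Matrix

theorem cmap_mul (A B : Matrix (Fin 2) (Fin 2) ℝ) : cmap (A * B) = cmap A * cmap B :=
  Matrix.map_mul (f := Complex.ofRealHom)

theorem det_cmap (A : Matrix (Fin 2) (Fin 2) ℝ) : (cmap A).det = A.det :=
  (Complex.ofRealHom.map_det A).symm

theorem cmap_Smat (q : ℝ) : cmap (Smat q) = !![1, 0; (q : ℂ), 1] := by
  ext i j
  fin_cases i <;> fin_cases j <;> simp [cmap, Smat]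

theorem hasCommonEigenvector_self (A : Matrix (Fin 2) (Fin 2) ℝ) : HasCommonEigenvector A A := by
  obtain ⟨v, hv, c, h⟩ := exists_mulVec_eq_smul (cmap A)
  exact ⟨v, c, c, hv, h, h⟩

theorem det_Dmat {b : ℝ} (hb : 0 < b) : (Dmat b).det = 1 := by
  have : Real.sqrt b ≠ 0 := (Real.sqrt_pos.mpr hb).ne'
  simp [Dmat, det_fin_two_of, this]

theorem det_Rmat {μ : ℝ} (hμ : μ ≠ 0) (φ : ℝ) : (Rmat μ φ).det = 1 := by
  rw [Rmat, det_fin_two_of]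
  field_simp
  linear_combination Real.cos_sq_add_sin_sq φ

theorem trace_Dmat_mul_Smat_mul_Rmat (b μ q φ : ℝ) :
    (Dmat b * Smat q * Rmat μ φ).trace =
      Real.sqrt b * Real.cos φ + (q * Real.sin φ / μ + Real.cos φ) / Real.sqrt b := by
  simp only [Dmat, Smat, Rmat, trace_fin_two, mul_apply, Fin.sum_univ_two, of_apply, cons_val',
    cons_val_zero, cons_val_one, cons_val_fin_one]
  ring

theorem sin_ne_zero_of_abs_trace_lt_two {b μ q φ : ℝ} (hb : 0 < b)
    (h : |(Dmat b * Smat q * Rmat μ φ).trace| < 2) : Real.sin φ ≠ 0 := by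
  intro hs
  have hr : 0 < Real.sqrt b := Real.sqrt_pos.mpr hb
  have hcos : |Real.cos φ| = 1 := by
    refine (pow_eq_one_iff_of_nonneg (abs_nonneg _) two_ne_zero).mp ?_
    simpa [hs] using Real.sin_sq_add_cos_sq φ
  have htwo : 2 ≤ Real.sqrt b + 1 / Real.sqrt b := by
    have : Real.sqrt b + 1 / Real.sqrt b - 2 = (Real.sqrt b - 1) ^ 2 / Real.sqrt b := by
      field_simp
      ring
    linarith [div_nonneg (sq_nonneg (Real.sqrt b - 1)) hr.le]
  have htr : Real.sqrt b * Real.cos φ + (q * 0 / μ + Real.cos φ) / Real.sqrt b =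
      Real.cos φ * (Real.sqrt b + 1 / Real.sqrt b) := by ring
  rw [trace_Dmat_mul_Smat_mul_Rmat, hs, htr, abs_mul, hcos, one_mul,
    abs_of_pos (by positivity)] at h
  linarith

theorem rkm_common_eigenvector_iff_general
    (b μ q₁ q₂ : ℝ) (hb : 1 ≤ b)
    (hell₁ : |(Dmat b * Smat q₁ * Rmat μ μ).trace| < 2) :
    Real.sin μ ≠ 0 ∧
    (HasCommonEigenvector (Dmat b * Smat q₁ * Rmat μ μ) (Dmat b * Smat q₂ * Rmat μ μ) ↔
      q₁ = q₂) := by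
  have hb₀ : 0 < b := by linarith
  have hs : Real.sin μ ≠ 0 := sin_ne_zero_of_abs_trace_lt_two hb₀ hell₁
  have hμ : μ ≠ 0 := by rintro rfl; simp at hs
  refine ⟨hs, fun ⟨v, c₁, c₂, hv, h₁, h₂⟩ => ?_, ?_⟩
  · rw [cmap_mul, cmap_mul, cmap_Smat] at h₁ h₂
    refine Complex.ofReal_injective (eq_of_common_eigenvector_mul_shear_mul ?_ ?_ ?_ ?_ hv h₁ h₂)
    · simp [cmap, Dmat]
    · simp [det_cmap, det_Dmat hb₀]
    · simp [det_cmap, det_Rmat hμ]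
    · simpa [cmap, Rmat, hμ] using Complex.ofReal_ne_zero.mpr hs
  · rintro rfl
    exact hasCommonEigenvector_self _

/-- Lemma 3.12 (common eigenvectors of random-Kirchhoff-model transfer matrices):
for `b ≥ 1`, `μ > 0` and `q₁, q₂ ∈ ℝ` with both `T(qᵢ) = D(b) S(qᵢ) R_μ(μ)` elliptic
(which forces `sin μ ≠ 0`), `T(q₁)` and `T(q₂)` have a common eigenvector in
`ℂ² \ {0}` iff `q₁ = q₂`. -/
theorem rkm_common_eigenvector_iff
    (b μ q₁ q₂ : ℝ) (hb : 1 ≤ b) (hμ : 0 < μ)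
    (hell₁ : |(Dmat b * Smat q₁ * Rmat μ μ).trace| < 2)
    (hell₂ : |(Dmat b * Smat q₂ * Rmat μ μ).trace| < 2) :
    Real.sin μ ≠ 0 ∧
    (HasCommonEigenvector (Dmat b * Smat q₁ * Rmat μ μ) (Dmat b * Smat q₂ * Rmat μ μ) ↔
      q₁ = q₂) :=
  rkm_common_eigenvector_iff_general b μ q₁ q₂ hb hell₁
end

section
/- Lyapunov exponent of the random Kirchhoff model at the Dirichlet energies (Lemma 3.12): Fix b \ge 1, an integer k \ge 1, \mu := k\pi, q_0 \ge 0, and any sequence (q_n)_{n\ge 1} of reals with |q_n| \le q_0 for all n. Set T(q) := D(b) \cdot S(q) \cdot R_\mu(\mu) and U(n) := T(q_n) \cdots T(q_1). Then lim_{n\to\infty} (1/n) \log \|U(n)\| = (1/2) \log b. -/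
/-!
At `μ = kπ` the rotation `R_μ(μ)` is `(-1)^k • 1`, so every transfer matrix is `±` the lower
triangular matrix `[[a, 0], [q/a, a⁻¹]]` with `a = √b ≥ 1`. Products of such matrices stay lower
triangular with diagonal `(aⁿ, a⁻ⁿ)` and off-diagonal entry of size at most `n q₀ aⁿ`, whence
`aⁿ ≤ ‖U(n)‖ ≤ aⁿ (2 + n q₀)`; the polynomial factor disappears in `(1/n) log`.
-/

open Real Filter Topology
open scoped Matrix.Norms.L2Operator

namespace Matrix

variable {𝕜 m n : Type*} [RCLike 𝕜] [Fintype m] [Fintype n] [DecidableEq n]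

theorem norm_entry_le_l2_opNorm (A : Matrix m n 𝕜) (i : m) (j : n) : ‖A i j‖ ≤ ‖A‖ := by
  have hcol := A.l2_opNorm_mulVec (WithLp.toLp 2 (Pi.single j 1))
  have hentry := PiLp.norm_apply_le ((EuclideanSpace.equiv m 𝕜).symm (A *ᵥ Pi.single j 1)) i
  simp only [mulVec_single, MulOpposite.op_one, one_smul, PiLp.continuousLinearEquiv_symm_apply,
    PiLp.toLp_single, PiLp.norm_single, norm_one, mul_one, col_apply] at hcol hentry
  exact hentry.trans hcol

theorem l2_opNorm_single_le [DecidableEq m] (i : m) (j : n) (c : 𝕜) : ‖single i j c‖ ≤ ‖c‖ := by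
  rw [l2_opNorm_def]
  refine ContinuousLinearMap.opNorm_le_bound _ (norm_nonneg c) fun x => ?_
  change ‖WithLp.toLp 2 (single i j c *ᵥ x.ofLp)‖ ≤ _
  rw [single_mulVec]
  change ‖PiLp.single 2 (β := fun _ : m => 𝕜) i (c * x j)‖ ≤ _
  rw [PiLp.norm_single, norm_mul]
  gcongr
  exact PiLp.norm_apply_le x j

theorem l2_opNorm_le_sum_norm_entry [DecidableEq m] (A : Matrix m n 𝕜) :
    ‖A‖ ≤ ∑ i, ∑ j, ‖A i j‖ :=
  calc ‖A‖ = ‖∑ i, ∑ j, single i j (A i j)‖ := by rw [← matrix_eq_sum_single]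
    _ ≤ ∑ i, ‖∑ j, single i j (A i j)‖ := norm_sum_le _ _
    _ ≤ ∑ i, ∑ j, ‖single i j (A i j)‖ := by gcongr; exact norm_sum_le _ _
    _ ≤ ∑ i, ∑ j, ‖A i j‖ := by gcongr; exact l2_opNorm_single_le _ _ _

end Matrix

theorem exists_eq_smul_lowerTriangular_pow {ε a ρ : ℝ} {r : ℕ → ℝ}
    {M : ℕ → Matrix (Fin 2) (Fin 2) ℝ} (ha : 1 ≤ a) (hr : ∀ n, |r n| ≤ ρ) (h0 : M 0 = 1)
    (hM : ∀ n, M (n + 1) = ε • !![a, 0; r n, a⁻¹] * M n) (n : ℕ) :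
    ∃ c, |c| ≤ n * ρ * a ^ n ∧ M n = ε ^ n • !![a ^ n, 0; c, a⁻¹ ^ n] := by
  induction n with
  | zero => exact ⟨0, by simp, by simp [h0, Matrix.one_fin_two]⟩
  | succ n ih =>
    obtain ⟨c, hc, hMn⟩ := ih
    refine ⟨r n * a ^ n + a⁻¹ * c, ?_, ?_⟩
    · have hρ : 0 ≤ ρ := (abs_nonneg _).trans (hr 0)
      have ha0 : 0 < a := zero_lt_one.trans_le ha
      have hpow : a ^ n ≤ a ^ (n + 1) := pow_le_pow_right₀ ha n.le_succ
      have hinv : a⁻¹ ≤ 1 := inv_le_one_of_one_le₀ ha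
      calc |r n * a ^ n + a⁻¹ * c| ≤ ρ * a ^ n + 1 * (n * ρ * a ^ n) := by
            grw [abs_add_le, abs_mul, abs_mul, abs_of_pos (pow_pos ha0 n),
              abs_of_pos (inv_pos.2 ha0), hr n, hc, hinv]
        _ = (n + 1 : ℕ) * ρ * a ^ n := by push_cast; ring
        _ ≤ (n + 1 : ℕ) * ρ * a ^ (n + 1) := by gcongr
    · rw [hM, hMn, Matrix.smul_mul, Matrix.mul_smul, smul_smul, ← pow_succ', Matrix.mul_fin_two]
      congr 1
      ext i j
      fin_cases i <;> fin_cases j <;> simp [pow_succ']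

theorem pow_le_norm_smul_lowerTriangular {ε a c : ℝ} (hε : |ε| = 1) (ha : 0 ≤ a) (n : ℕ) :
    a ^ n ≤ ‖ε ^ n • !![a ^ n, 0; c, a⁻¹ ^ n]‖ := by
  rw [norm_smul, norm_pow, Real.norm_eq_abs, hε, one_pow, one_mul]
  simpa [abs_of_nonneg ha] using
    Matrix.norm_entry_le_l2_opNorm !![a ^ n, 0; c, a⁻¹ ^ n] 0 0

theorem norm_smul_lowerTriangular_le {ε a c ρ : ℝ} (hε : |ε| = 1) (ha : 1 ≤ a) {n : ℕ}
    (hc : |c| ≤ n * ρ * a ^ n) : ‖ε ^ n • !![a ^ n, 0; c, a⁻¹ ^ n]‖ ≤ a ^ n * (2 + n * ρ) := by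
  have ha0 : 0 < a := zero_lt_one.trans_le ha
  have hinv : a⁻¹ ^ n ≤ a ^ n :=
    (pow_le_one₀ (inv_nonneg.2 ha0.le) (inv_le_one_of_one_le₀ ha)).trans (one_le_pow₀ ha)
  rw [norm_smul, norm_pow, Real.norm_eq_abs, hε, one_pow, one_mul]
  refine (Matrix.l2_opNorm_le_sum_norm_entry _).trans ?_
  simp only [Fin.sum_univ_two, Matrix.of_apply, Matrix.cons_val', Matrix.cons_val_zero,
    Matrix.cons_val_one, Matrix.empty_val', Matrix.cons_val_fin_one, Real.norm_eq_abs,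
    abs_of_pos (pow_pos ha0 n), abs_of_pos (pow_pos (inv_pos.2 ha0) n)]
  linarith

theorem tendsto_inv_mul_log_of_pow_le_of_le_pow_mul {x : ℕ → ℝ} {a C D : ℝ} (ha : 0 < a)
    (hC : 0 < C) (hD : 0 ≤ D) (hlow : ∀ n, a ^ n ≤ x n) (hup : ∀ n, x n ≤ a ^ n * (C + n * D)) :
    Tendsto (fun n : ℕ => 1 / (n : ℝ) * log (x n)) atTop (𝓝 (log a)) := by
  have hlog_div : Tendsto (fun n : ℕ => log n / n) atTop (𝓝 0) :=
    isLittleO_log_id_atTop.tendsto_div_nhds_zero.comp tendsto_natCast_atTop_atTop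
  have herr : Tendsto (fun n : ℕ => log a + (log n / n + log (C + D) / n)) atTop (𝓝 (log a)) := by
    simpa using tendsto_const_nhds.add (hlog_div.add (tendsto_const_div_atTop_nhds_zero_nat _))
  refine tendsto_of_tendsto_of_tendsto_of_le_of_le' tendsto_const_nhds herr ?_ ?_
  all_goals filter_upwards [eventually_gt_atTop 0] with n hn
  all_goals have hn' : (0 : ℝ) < n := Nat.cast_pos.2 hn
  · have := log_le_log (pow_pos ha n) (hlow n)
    rw [log_pow] at this
    rw [one_div_mul_eq_div, le_div_iff₀ hn']
    linarith
  · have hxpos : 0 < x n := (pow_pos ha n).trans_le (hlow n)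
    have hlin : C + n * D ≤ n * (C + D) := by nlinarith [(Nat.one_le_cast (α := ℝ)).2 hn]
    have hupper : log (x n) ≤ n * log a + (log n + log (C + D)) := by
      calc log (x n) ≤ log (a ^ n * (n * (C + D))) := log_le_log hxpos ((hup n).trans (by gcongr))
        _ = n * log a + (log n + log (C + D)) := by
          rw [log_mul, log_pow, log_mul] <;> positivity
    rw [one_div_mul_eq_div, div_le_iff₀ hn']
    field_simp
    linarith

theorem Rmat_natCast_mul_pi (k : ℕ) : Rmat (k * π) (k * π) = (-1 : ℝ) ^ k • 1 := by
  ext i j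
  fin_cases i <;> fin_cases j <;> simp [Rmat, Real.sin_nat_mul_pi, Real.cos_nat_mul_pi]

theorem Dmat_mul_Smat (b q : ℝ) : Dmat b * Smat q = !![√b, 0; q / √b, (√b)⁻¹] := by
  simp [Dmat, Smat, div_eq_inv_mul]

theorem rkm_dirichlet_lyapunov_general
    (b : ℝ) (hb : 1 ≤ b) (k : ℕ) (μ : ℝ) (hμ : μ = k * Real.pi)
    (q0 : ℝ) (hq0 : 0 ≤ q0) (q : ℕ → ℝ) (hq : ∀ n : ℕ, |q n| ≤ q0)
    (U : ℕ → Matrix (Fin 2) (Fin 2) ℝ)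
    (hU0 : U 0 = 1)
    (hU : ∀ n : ℕ, U (n + 1) = Dmat b * Smat (q (n + 1)) * Rmat μ μ * U n) :
    Filter.Tendsto (fun n : ℕ => (1 / (n : ℝ)) * Real.log (opNorm (U n)))
      Filter.atTop (nhds ((1 / 2) * Real.log b)) := by
  set a := √b with ha_def
  have ha : 1 ≤ a := Real.one_le_sqrt.2 hb
  have ha0 : 0 < a := zero_lt_one.trans_le ha
  have hε : |(-1 : ℝ) ^ k| = 1 := by simp
  have hr : ∀ n, |q (n + 1) / a| ≤ q0 := fun n => by
    rw [abs_div, abs_of_pos ha0]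
    exact (div_le_self (abs_nonneg _) ha).trans (hq _)
  have hstep : ∀ n, U (n + 1) = (-1 : ℝ) ^ k • !![a, 0; q (n + 1) / a, a⁻¹] * U n := fun n => by
    rw [hU, hμ, Rmat_natCast_mul_pi, Dmat_mul_Smat, mul_smul_comm, mul_one, smul_mul_assoc]
  have hshape := exists_eq_smul_lowerTriangular_pow ha hr hU0 hstep
  have hlog : (1 / 2) * log b = log a := by rw [ha_def, log_sqrt (zero_le_one.trans hb)]; ring
  rw [hlog]
  refine tendsto_inv_mul_log_of_pow_le_of_le_pow_mul ha0 two_pos hq0 (fun n => ?_) (fun n => ?_)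
  · obtain ⟨c, -, hUn⟩ := hshape n
    exact hUn ▸ pow_le_norm_smul_lowerTriangular hε ha0.le n
  · obtain ⟨c, hc, hUn⟩ := hshape n
    exact hUn ▸ norm_smul_lowerTriangular_le hε ha hc

/-- Lyapunov exponent of the random Kirchhoff model at the Dirichlet energies
(Lemma 3.12): for `b ≥ 1`, `μ = kπ` with `k ≥ 1` an integer, and any uniformly bounded
sequence `(q_n)_{n ≥ 1}`, the products `U(n) = T(q_n) ⋯ T(q_1)` of the transfer matrices
`T(q) = D(b) S(q) R_μ(μ)` satisfy `(1/n) log ‖U(n)‖ → (1/2) log b`. -/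
theorem rkm_dirichlet_lyapunov
    (b : ℝ) (hb : 1 ≤ b) (k : ℕ) (hk : 1 ≤ k) (μ : ℝ) (hμ : μ = k * Real.pi)
    (q0 : ℝ) (hq0 : 0 ≤ q0) (q : ℕ → ℝ) (hq : ∀ n : ℕ, |q n| ≤ q0)
    (U : ℕ → Matrix (Fin 2) (Fin 2) ℝ)
    (hU0 : U 0 = 1)
    (hU : ∀ n : ℕ, U (n + 1) = Dmat b * Smat (q (n + 1)) * Rmat μ μ * U n) :
    Filter.Tendsto (fun n : ℕ => (1 / (n : ℝ)) * Real.log (opNorm (U n)))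
      Filter.atTop (nhds ((1 / 2) * Real.log b)) :=
  rkm_dirichlet_lyapunov_general b hb k μ hμ q0 hq0 q hq U hU0 hU
end

section
/- Möbius transform identity for one-parameter transfer-matrix groups (the computation establishing equation (E.6) used in Lemma E.4 and Corollary E.5): Let \alpha, \beta, \gamma \in \mathbb{C} with \alpha \ne 0, set X := [[\beta, \alpha], [\gamma, -\beta]] and let \widetilde{T}(\ell) := \exp(\ell X) (matrix exponential) with entries \widetilde{t}_{ij}(\ell). Let \dot{T} = [[\hat{a}, \hat{b}], [\hat{c}, \hat{d}]] be a complex 2\times 2 matrix with determinant 1, and let m \in \mathbb{C}. Define f(\ell) := \widetilde{t}_{22}(\ell)(\hat{d} - \hat{b} m) + \widetilde{t}_{12}(\ell)(\hat{c} - \hat{a} m). Then f is differentiable in \ell, and for every \ell \in \mathbb{R} with f(\ell) \ne 0, writing A := \widetilde{T}(\ell)^{-1} \cdot \dot{T}^{-1} with entries A_{ij}, one has A_{11} + A_{12} m = f(\ell) and (A_{21} + A_{22} m)/(A_{11} + A_{12} m) = -f'(\ell)/(\alpha f(\ell)) - \beta/\alpha. -/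
/-!
The vector `g(ℓ) = T̃(ℓ)⁻¹ T̂⁻¹ (1, m)ᵀ = exp(-ℓX) T̂⁻¹ (1, m)ᵀ` solves `g' = -X g`, whose first
row reads `g₀' = -β g₀ - α g₁`; hence the Möbius value `g₁ / g₀` equals `-(g₀' / g₀ + β) / α`.
It remains to recognise `f` as `g₀`. Because `X` is traceless, `adj X = -X`, and for `2 × 2`
matrices `adj M = J Mᵀ J⁻¹` with `J` the rotation by a right angle; as `exp` commutes with
transposition and conjugation, `exp(ℓX)⁻¹ = exp(adj(ℓX)) = adj(exp(ℓX))`.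
-/

open NormedSpace Matrix

namespace Matrix

theorem adjugate_fin_two_eq_conj_transpose {R : Type*} [CommRing R]
    (M : Matrix (Fin 2) (Fin 2) R) :
    adjugate M = !![0, -1; 1, 0] * Mᵀ * !![0, -1; 1, 0]⁻¹ := by
  rw [inv_eq_right_inv (B := !![0, 1; -1, 0]) (by simp [one_fin_two]), adjugate_fin_two]
  ext i j
  fin_cases i <;> fin_cases j <;> simp [mul_apply, vecMul, dotProduct, Fin.sum_univ_two]

section Exponential

variable {𝔸 : Type*} [NormedCommRing 𝔸] [NormedAlgebra ℚ 𝔸] [CompleteSpace 𝔸]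

theorem exp_adjugate_fin_two (A : Matrix (Fin 2) (Fin 2) 𝔸) :
    exp (adjugate A) = adjugate (exp A) := by
  have hJ : IsUnit (!![0, -1; 1, 0] : Matrix (Fin 2) (Fin 2) 𝔸) := by
    simp [isUnit_iff_isUnit_det, det_fin_two_of]
  rw [adjugate_fin_two_eq_conj_transpose, exp_conj _ _ hJ, exp_transpose,
    adjugate_fin_two_eq_conj_transpose]

theorem inv_exp_eq_adjugate_of_trace_eq_zero (A : Matrix (Fin 2) (Fin 2) 𝔸)
    (hA : trace A = 0) : (exp A)⁻¹ = adjugate (exp A) := by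
  have hadj : adjugate A = -A := by
    rw [trace_fin_two] at hA
    rw [adjugate_fin_two, eta_fin_two A]
    ext i j; fin_cases i <;> fin_cases j <;> simp [eq_neg_of_add_eq_zero_left hA]
  rw [← exp_neg, ← hadj, exp_adjugate_fin_two]

end Exponential

section Derivative

attribute [local instance] Matrix.linftyOpNormedRing Matrix.linftyOpNormedAlgebra

theorem hasDerivAt_exp_smul_mulVec {𝕂 𝔸 m : Type*} [RCLike 𝕂] [NormedRing 𝔸]
    [NormedAlgebra 𝕂 𝔸] [CompleteSpace 𝔸] [Fintype m] [DecidableEq m]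
    (X : Matrix m m 𝔸) (v : m → 𝔸) (t : 𝕂) :
    HasDerivAt (fun s : 𝕂 => exp (s • X) *ᵥ v) (X *ᵥ (exp (t • X) *ᵥ v)) t := by
  let L : Matrix m m 𝔸 →L[𝕂] m → 𝔸 :=
    ((mulVecBilin 𝕂 𝕂).flip v).mkContinuous ‖v‖ fun M => by
      simpa [mul_comm] using linfty_opNorm_mulVec M v
  rw [mulVec_mulVec]
  -- the operator norm's uniform structure is the product one only up to unfolding
  exact L.hasFDerivAt.comp_hasDerivAt t
    (@hasDerivAt_exp_smul_const' 𝕂 _ _ _ _ (by exact instCompleteSpace m m 𝔸) X t)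

end Derivative

end Matrix

/-- Möbius transform identity for one-parameter transfer-matrix groups (the computation
establishing equation (E.6), used in Lemma E.4 and Corollary E.5): with
`X = [[β, α], [γ, -β]]`, `T̃(ℓ) = exp(ℓX)`, a fixed `T̂ ∈ SL₂(ℂ)` and `m ∈ ℂ`, set
`f(ℓ) = t̃₂₂(ℓ)(d̂ - b̂ m) + t̃₁₂(ℓ)(ĉ - â m)`.  Then `f` is differentiable, and whenever
`f(ℓ) ≠ 0`, with `A = T̃(ℓ)⁻¹ T̂⁻¹` one has `A₁₁ + A₁₂ m = f(ℓ)` and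
`(A₂₁ + A₂₂ m)/(A₁₁ + A₁₂ m) = -f'(ℓ)/(α f(ℓ)) - β/α`. -/
theorem moebius_log_derivative_identity
    (α β γ : ℂ) (hα : α ≠ 0)
    (X : Matrix (Fin 2) (Fin 2) ℂ) (hX : X = !![β, α; γ, -β])
    (That : Matrix (Fin 2) (Fin 2) ℂ) (hThat : That.det = 1) (m : ℂ)
    (f : ℝ → ℂ)
    (hf : ∀ ℓ : ℝ, f ℓ =
      (NormedSpace.exp ((ℓ : ℂ) • X)) 1 1 * (That 1 1 - That 0 1 * m) +
        (NormedSpace.exp ((ℓ : ℂ) • X)) 0 1 * (That 1 0 - That 0 0 * m)) :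
    Differentiable ℝ f ∧
    ∀ ℓ : ℝ, f ℓ ≠ 0 →
      ((NormedSpace.exp ((ℓ : ℂ) • X))⁻¹ * That⁻¹) 0 0 +
          ((NormedSpace.exp ((ℓ : ℂ) • X))⁻¹ * That⁻¹) 0 1 * m = f ℓ ∧
      (((NormedSpace.exp ((ℓ : ℂ) • X))⁻¹ * That⁻¹) 1 0 +
          ((NormedSpace.exp ((ℓ : ℂ) • X))⁻¹ * That⁻¹) 1 1 * m) /
        (((NormedSpace.exp ((ℓ : ℂ) • X))⁻¹ * That⁻¹) 0 0 +
          ((NormedSpace.exp ((ℓ : ℂ) • X))⁻¹ * That⁻¹) 0 1 * m) =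
        -(deriv f ℓ) / (α * f ℓ) - β / α := by
  let w : Fin 2 → ℂ := That⁻¹ *ᵥ ![1, m]
  have hinv (ℓ : ℝ) : (exp ((ℓ : ℂ) • X))⁻¹ = exp (ℓ • -X) := by
    rw [smul_neg, Matrix.exp_neg, Complex.coe_smul]
  have hrow (ℓ : ℝ) (i : Fin 2) :
      ((exp ((ℓ : ℂ) • X))⁻¹ * That⁻¹) i 0 + ((exp ((ℓ : ℂ) • X))⁻¹ * That⁻¹) i 1 * m =
        (exp (ℓ • -X) *ᵥ w) i := by
    have hcol (A : Matrix (Fin 2) (Fin 2) ℂ) : A i 0 + A i 1 * m = (A *ᵥ ![1, m]) i := by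
      simp [mulVec, dotProduct, Fin.sum_univ_two]
    rw [hcol, hinv, ← mulVec_mulVec]
  have hfg (ℓ : ℝ) : f ℓ = (exp (ℓ • -X) *ᵥ w) 0 := by
    have hX0 : trace ((ℓ : ℂ) • X) = 0 := by simp [hX]
    rw [← hrow, inv_exp_eq_adjugate_of_trace_eq_zero _ hX0, inv_def That, hThat, hf]
    simp only [Complex.coe_smul, Fin.isValue, adjugate_fin_two, Ring.inverse_one, one_smul,
      mul_apply, of_apply, cons_val', cons_val_fin_one, cons_val_zero, Fin.sum_univ_two,
      cons_val_one, mul_neg, neg_mul, neg_neg]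
    ring
  have hderiv (ℓ : ℝ) : HasDerivAt f (-(β * f ℓ + α * (exp (ℓ • -X) *ᵥ w) 1)) ℓ := by
    have hXv (v : Fin 2 → ℂ) : (-X *ᵥ v) 0 = -(β * v 0 + α * v 1) := by
      simp [hX, mulVec, dotProduct, Fin.sum_univ_two]
    have hv := hasDerivAt_pi.mp (hasDerivAt_exp_smul_mulVec (-X) w ℓ) 0
    rw [hXv] at hv
    simpa only [← hfg] using hv
  refine ⟨fun ℓ => (hderiv ℓ).differentiableAt, fun ℓ hfℓ => ⟨by rw [hrow, hfg], ?_⟩⟩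
  rw [hrow, hrow, ← hfg, (hderiv ℓ).deriv]
  field_simp
  ring
end
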